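/- arXiv:2207.08300 — 2 statements merged into one kernel-verified Lean document; each statement's English description precedes it below -/
import Mathlib

section
/- For series d, e ∈ ℝ^m⟨⟨X⟩⟩ and c ∈ ℝ^p⟨⟨X⟩⟩ with proper part c' = c − (c,∅)∅, the map e ↦ c ∘̄ δ_e satisfies κ(c ∘̄ δ_d, c ∘̄ δ_e) ≤ σ^{ord(c')} κ(d,e); in particular, since ord(c') ≥ 1 and σ ∈ (0,1), this map is a strong contraction on the complete ultrametric space. -/
open scoped BigOperators

namespace FPS

/-- A (noncommutative) formal power series over alphabet `X` is a map from words to `ℝ`. -/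
abbrev Series (X : Type*) := List X → ℝ

noncomputable section

variable {X : Type*} [DecidableEq X]

/-- The series `1·∅`. -/
def one : Series X := fun η => if η = [] then 1 else 0

/-- Cauchy (concatenation) product. -/
def cauchy (c d : Series X) : Series X := fun η =>
  ∑ i ∈ Finset.range (η.length + 1), c (η.take i) * d (η.drop i)

/-- Shuffle product. -/
def sh (c d : Series X) : List X → ℝ
  | [] => c [] * d []
  | x :: t => sh (fun w => c (x :: w)) d t + sh c (fun w => d (x :: w)) t

/-- Cauchy powers. -/
def cpow (c : Series X) : ℕ → Series X
  | 0 => one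
  | k + 1 => cauchy c (cpow c k)

/-- Shuffle powers. -/
def shpow (c : Series X) : ℕ → Series X
  | 0 => one
  | k + 1 => sh c (shpow c k)

/-- The proper series `1 - s/(s,∅)` entering the inverse formulas (negated proper part of `s/(s,∅)`). -/
def sprime (s : Series X) : Series X := fun w => if w = [] then 0 else - (s w / s [])

/-- Cauchy inverse `(s,∅)⁻¹ Σ_k (s')^k` of a purely improper series. -/
def cInv (s : Series X) : Series X := fun η =>
  (s [])⁻¹ * ∑ k ∈ Finset.range (η.length + 1), cpow (sprime s) k η

/-- Shuffle inverse `(s,∅)⁻¹ Σ_k (s')^{⧢k}` of a purely improper series. -/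
def shInv (s : Series X) : Series X := fun η =>
  (s [])⁻¹ * ∑ k ∈ Finset.range (η.length + 1), shpow (sprime s) k η

/-- The order: minimal length of a word in the support (`⊤` for the zero series). -/
def ord (c : Series X) : ℕ∞ := sInf ((fun η : List X => (η.length : ℕ∞)) '' {η | c η ≠ 0})

/-- `σ^n` with `σ^⊤ = 0`. -/
def powE (σ : ℝ) : ℕ∞ → ℝ := fun n => if n = ⊤ then 0 else σ ^ n.toNat

/-- The ultrametric `κ(c,d) = σ^{ord(c-d)}`. -/
def kappa (σ : ℝ) (c d : Series X) : ℝ := powE σ (ord (c - d))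

/-- Order of a vector of series (minimum over components). -/
def ordV {n : ℕ} (c : Fin n → Series X) : ℕ∞ := ⨅ i, ord (c i)

/-- Ultrametric on vectors of series. -/
def kappaV (σ : ℝ) {n : ℕ} (c d : Fin n → Series X) : ℝ := powE σ (ordV (c - d))

/-- Proper part `c - (c,∅)∅`. -/
def properPart (c : Series X) : Series X := fun w => if w = [] then 0 else c w

/-- Left concatenation by a letter: `x·s`. -/
def leftc (x : X) (s : Series X) : Series X := fun η =>
  match η with
  | [] => 0
  | y :: t => if y = x then s t else 0

end

noncomputable section

/-- `φ̄_d(η)` : the algebra homomorphism defining the multiplicative mixed composition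
product, with `φ̄_d(x_0)(w) = x_0 w` and `φ̄_d(x_i)(w) = x_i (d_i ⧢ w)`. -/
def phiWord {m : ℕ} (d : Fin m → Series (Fin (m + 1))) :
    List (Fin (m + 1)) → Series (Fin (m + 1)) → Series (Fin (m + 1))
  | [], w => w
  | i :: t, w =>
      Fin.cases (leftc 0 (phiWord d t w)) (fun j => leftc j.succ (sh (d j) (phiWord d t w))) i

/-- Multiplicative mixed composition product `c ∘̄ δ_d = Σ_η (c,η) φ̄_d(η)(1)`. -/
def mix {m : ℕ} (c : Series (Fin (m + 1))) (d : Fin m → Series (Fin (m + 1))) :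
    Series (Fin (m + 1)) := fun η =>
  ∑ k ∈ Finset.range (η.length + 1),
    ∑ v : List.Vector (Fin (m + 1)) k, c v.toList * phiWord d v.toList one η

/-- `ψ_e(η)` : the algebra homomorphism defining the composition product, with
`ψ_e(x'_i)(w) = x_0 (e_i ⧢ w)`, `e_0 = 1∅`. -/
def psiWord {ℓ m : ℕ} (e : Fin ℓ → Series (Fin (m + 1))) :
    List (Fin (ℓ + 1)) → Series (Fin (m + 1)) → Series (Fin (m + 1))
  | [], w => w
  | i :: t, w => leftc 0 (sh (Fin.cases one e i) (psiWord e t w))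

/-- Composition product `c ∘ e = Σ_η (c,η) ψ_e(η)(1)`. -/
def comp {ℓ m : ℕ} (c : Series (Fin (ℓ + 1))) (e : Fin ℓ → Series (Fin (m + 1))) :
    Series (Fin (m + 1)) := fun η =>
  ∑ k ∈ Finset.range (η.length + 1),
    ∑ v : List.Vector (Fin (ℓ + 1)) k, c v.toList * psiWord e v.toList one η

/-- The multiplicative composition product on `δ`-series:
`δ_c ∘ δ_d = δ_{d ⧢ (c ∘̄ δ_d)}`, expressed on the underlying series. -/
def star {m : ℕ} (c d : Fin m → Series (Fin (m + 1))) : Fin m → Series (Fin (m + 1)) :=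
  fun i => sh (d i) (mix (c i) d)

/-- The all-ones series vector (generating series of the identity `δ_1`). -/
def oneV {X : Type*} [DecidableEq X] (m : ℕ) : Fin m → Series X := fun _ => one

open Classical in
/-- The inverse `d^{∘-1}` in the multiplicative dynamic output feedback group: the unique
solution of `e = d^{⧢-1} ∘̄ δ_e`. -/
def dynInv {m : ℕ} (d : Fin m → Series (Fin (m + 1))) : Fin m → Series (Fin (m + 1)) :=
  if h : ∃ e : Fin m → Series (Fin (m + 1)), e = fun i => mix (shInv (d i)) e then h.choose
  else oneV m

/-- Shuffle power of a family: `c^{⧢n} = c_1^{⧢n_1} ⧢ ⋯ ⧢ c_ℓ^{⧢n_ℓ}`. -/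
def shFam {X : Type*} [DecidableEq X] {ℓ : ℕ} (c : Fin ℓ → Series X) (n : Fin ℓ →₀ ℕ) :
    Series X :=
  (List.finRange ℓ).foldr (fun i acc => sh (shpow (c i) (n i)) acc) one

/-- Wiener-Fliess composition product `d ∘̂ c = Σ_{η∈X̃*} (d,η) c^{⧢η}` of a commutative
series `d` with a (proper) noncommutative series vector `c`. -/
def wf {X : Type*} [DecidableEq X] {ℓ : ℕ} (d : MvPowerSeries (Fin ℓ) ℝ)
    (c : Fin ℓ → Series X) : Series X := fun η =>
  ∑ n ∈ Finset.Iic (Finsupp.equivFunOnFinite.symm fun _ : Fin ℓ => η.length),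
    MvPowerSeries.coeff n d * shFam c n η

end

/-!
Write `N = ord(d - e)`. The order is superadditive under shuffle and increases by one under
left concatenation by a letter, and the shuffle is bilinear, so an induction on the word `v`
shows that `φ̄_d(v)(1)` and `φ̄_e(v)(1)` agree on all words shorter than `|v| + N`. A word
`v ≠ ∅` with `(c, v) ≠ 0` has `|v| ≥ ord(c')`, and the empty word contributes the same
to both products. Hence `ord(c ∘̄ δ_d - c ∘̄ δ_e) ≥ ord(c') + N`, and `σ^(·)` is antitone
and turns this sum into a product; `ord(c') ≥ 1` gives the factor `σ`.
-/

section Order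

variable {X : Type*}

lemma ord_le_of_ne {c : Series X} {η : List X} (h : c η ≠ 0) : ord c ≤ η.length :=
  sInf_le ⟨η, h, rfl⟩

lemma le_ord_iff {c : Series X} {n : ℕ∞} :
    n ≤ ord c ↔ ∀ η : List X, (η.length : ℕ∞) < n → c η = 0 := by
  refine ⟨fun h η hη => ?_, fun h => le_sInf ?_⟩
  · by_contra hc
    exact (hη.trans_le h).not_ge (ord_le_of_ne hc)
  · rintro _ ⟨η, hη, rfl⟩
    by_contra hlt
    exact hη (h η (not_le.mp hlt))

lemma le_ord_add {a b : Series X} {n : ℕ∞} (ha : n ≤ ord a) (hb : n ≤ ord b) :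
    n ≤ ord (a + b) := by
  rw [le_ord_iff] at *
  intro η hη
  simp [ha η hη, hb η hη]

lemma one_le_ord_properPart (c : Series X) : 1 ≤ ord (properPart c) := by
  rw [le_ord_iff]
  rintro (_ | ⟨x, η⟩) hη
  · rfl
  · simp at hη

lemma le_ord_leftc [DecidableEq X] (x : X) {s : Series X} {n : ℕ∞} (h : n ≤ ord s) :
    n + 1 ≤ ord (leftc x s) := by
  rw [le_ord_iff] at *
  rintro (_ | ⟨y, η⟩) hη
  · rfl
  · have hηn : (η.length : ℕ∞) < n := by
      simpa using (ENat.add_lt_add_iff_right ENat.one_ne_top).mp (by simpa using hη)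
    simp only [leftc]
    split_ifs
    · exact h η hηn
    · rfl

lemma leftc_sub [DecidableEq X] (x : X) (s s' : Series X) :
    leftc x (s - s') = leftc x s - leftc x s' := by
  funext η
  rcases η with _ | ⟨y, η⟩
  · simp [leftc]
  · by_cases hy : y = x <;> simp [leftc, hy]

end Order

section Shuffle

variable {X : Type*}

lemma sh_eq_zero_of_forall_mul_eq_zero : ∀ {a b : Series X} {η : List X},
    (∀ u v : List X, u.length + v.length = η.length → a u * b v = 0) → sh a b η = 0
  | _, _, [], h => h [] [] rfl
  | _, _, x :: η, h => by
    simp only [sh]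
    rw [sh_eq_zero_of_forall_mul_eq_zero fun u v huv => h (x :: u) v (by simp; omega),
      sh_eq_zero_of_forall_mul_eq_zero fun u v huv => h u (x :: v) (by simp; omega), add_zero]

lemma ord_add_ord_le_ord_sh (a b : Series X) : ord a + ord b ≤ ord (sh a b) := by
  rw [le_ord_iff]
  intro η hη
  refine sh_eq_zero_of_forall_mul_eq_zero fun u v huv => ?_
  by_contra hab
  obtain ⟨hu, hv⟩ := mul_ne_zero_iff.mp hab
  have : ord a + ord b ≤ η.length := by
    simpa [← huv] using add_le_add (ord_le_of_ne hu) (ord_le_of_ne hv)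
  exact hη.not_ge this

lemma sh_sub_left : ∀ (a a' b : Series X) (η : List X),
    sh (a - a') b η = sh a b η - sh a' b η
  | _, _, _, [] => sub_mul _ _ _
  | a, a', b, x :: η => by
    simp only [sh]
    rw [show (fun w => (a - a') (x :: w)) = (fun w => a (x :: w)) - fun w => a' (x :: w) from rfl,
      sh_sub_left, sh_sub_left]
    ring

lemma sh_sub_right : ∀ (a b b' : Series X) (η : List X),
    sh a (b - b') η = sh a b η - sh a b' η
  | _, _, _, [] => mul_sub _ _ _
  | a, b, b', x :: η => by
    simp only [sh]
    rw [show (fun w => (b - b') (x :: w)) = (fun w => b (x :: w)) - fun w => b' (x :: w) from rfl,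
      sh_sub_right, sh_sub_right]
    ring

lemma sh_sub_sh (a a' b b' : Series X) :
    sh a b - sh a' b' = sh (a - a') b + sh a' (b - b') := by
  funext η
  simp only [Pi.sub_apply, Pi.add_apply, sh_sub_left, sh_sub_right]
  ring

end Shuffle

section MixedComposition

variable {m : ℕ}

lemma length_add_ord_le_ord_phiWord (d : Fin m → Series (Fin (m + 1))) :
    ∀ (v : List (Fin (m + 1))) (w : Series (Fin (m + 1))),
      v.length + ord w ≤ ord (phiWord d v w)
  | [], w => by simp [phiWord]
  | i :: v, w => by
    have ih := length_add_ord_le_ord_phiWord d v w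
    rw [show ((i :: v).length : ℕ∞) + ord w = v.length + ord w + 1 by
      simp only [List.length_cons]; push_cast; ring]
    induction i using Fin.cases with
    | zero =>
      simp only [phiWord, Fin.cases_zero]
      exact le_ord_leftc _ ih
    | succ j =>
      simp only [phiWord, Fin.cases_succ]
      refine le_ord_leftc _ ?_
      exact (ih.trans le_add_self).trans (ord_add_ord_le_ord_sh _ _)

lemma le_ord_phiWord_sub (d e : Fin m → Series (Fin (m + 1))) :
    ∀ (v : List (Fin (m + 1))) (w : Series (Fin (m + 1))),
      v.length + ord w + ordV (d - e) ≤ ord (phiWord d v w - phiWord e v w)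
  | [], w => by simp [phiWord, le_ord_iff]
  | i :: v, w => by
    have ih := le_ord_phiWord_sub d e v w
    rw [show ((i :: v).length : ℕ∞) + ord w + ordV (d - e) = v.length + ord w + ordV (d - e) + 1
      by simp only [List.length_cons]; push_cast; ring]
    induction i using Fin.cases with
    | zero =>
      simp only [phiWord, Fin.cases_zero, ← leftc_sub]
      exact le_ord_leftc _ ih
    | succ j =>
      simp only [phiWord, Fin.cases_succ, ← leftc_sub, sh_sub_sh]
      refine le_ord_leftc _ (le_ord_add ?_ ((ih.trans le_add_self).trans
        (ord_add_ord_le_ord_sh _ _)))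
      calc (v.length : ℕ∞) + ord w + ordV (d - e) ≤ ord (phiWord d v w) + ord (d j - e j) :=
            add_le_add (length_add_ord_le_ord_phiWord d v w) (iInf_le _ j)
        _ ≤ _ := by rw [add_comm]; exact ord_add_ord_le_ord_sh _ _

lemma ord_properPart_add_ordV_sub_le_ord_mix_sub (c : Series (Fin (m + 1)))
    (d e : Fin m → Series (Fin (m + 1))) :
    ord (properPart c) + ordV (d - e) ≤ ord (mix c d - mix c e) := by
  rw [le_ord_iff]
  intro η hη
  simp only [Pi.sub_apply, mix, ← Finset.sum_sub_distrib, ← mul_sub]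
  refine Finset.sum_eq_zero fun k _ => Finset.sum_eq_zero fun v _ => ?_
  rcases eq_or_ne (c v.toList) 0 with hc | hc
  · rw [hc, zero_mul]
  rcases eq_or_ne v.toList [] with hv | hv
  · simp [hv, phiWord]
  have hcv : ord (properPart c) ≤ v.toList.length :=
    ord_le_of_ne (by simpa [properPart, hv] using hc)
  have hlt : (η.length : ℕ∞) <
      v.toList.length + ord (one : Series (Fin (m + 1))) + ordV (d - e) :=
    hη.trans_le (by gcongr; exact hcv.trans le_self_add)
  rw [← Pi.sub_apply, le_ord_iff.mp (le_ord_phiWord_sub d e _ one) η hlt, mul_zero]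

end MixedComposition

lemma powE_nonneg {σ : ℝ} (hσ : 0 ≤ σ) (n : ℕ∞) : 0 ≤ powE σ n := by
  unfold powE
  split <;> positivity

lemma powE_one (σ : ℝ) : powE σ 1 = σ := by
  simp [powE]

lemma powE_add (σ : ℝ) (a b : ℕ∞) : powE σ (a + b) = powE σ a * powE σ b := by
  induction a using ENat.recTopCoe <;> induction b using ENat.recTopCoe <;>
    simp [powE, ← Nat.cast_add, pow_add]

lemma powE_antitone {σ : ℝ} (h0 : 0 ≤ σ) (h1 : σ ≤ 1) : Antitone (powE σ) := by
  intro a b hab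
  induction b using ENat.recTopCoe with
  | top => exact powE_nonneg h0 a
  | coe b =>
    lift a to ℕ using ne_top_of_le_ne_top (ENat.natCast_ne_top b) hab
    simpa [powE] using pow_le_pow_of_le_one h0 h1 (by exact_mod_cast hab)

/-- `κ(c ∘̄ δ_d, c ∘̄ δ_e) ≤ σ^{ord(c')} κ(d, e)` where `c'` is the proper
part of `c`; in particular `e ↦ c ∘̄ δ_e` is a strong contraction. -/
theorem mix_strong_contraction (p m : ℕ) (σ : ℝ) (hσ0 : 0 < σ) (hσ1 : σ < 1)
    (c : Fin p → Series (Fin (m + 1))) (d e : Fin m → Series (Fin (m + 1))) :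
    kappaV σ (fun i => mix (c i) d) (fun i => mix (c i) e) ≤
      powE σ (ordV fun i => properPart (c i)) * kappaV σ d e ∧
    kappaV σ (fun i => mix (c i) d) (fun i => mix (c i) e) ≤ σ * kappaV σ d e := by
  have hord : (ordV fun i => properPart (c i)) + ordV (d - e) ≤
      ordV ((fun i => mix (c i) d) - fun i => mix (c i) e) :=
    le_iInf fun i => (add_le_add (iInf_le _ i) le_rfl).trans
      (ord_properPart_add_ordV_sub_le_ord_mix_sub (c i) d e)
  have hproper : 1 ≤ ordV fun i => properPart (c i) :=
    le_iInf fun i => one_le_ord_properPart (c i)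
  have hcontr : kappaV σ (fun i => mix (c i) d) (fun i => mix (c i) e) ≤
      powE σ (ordV fun i => properPart (c i)) * kappaV σ d e := by
    rw [kappaV, kappaV, ← powE_add]
    exact powE_antitone hσ0.le hσ1.le hord
  refine ⟨hcontr, hcontr.trans (mul_le_mul_of_nonneg_right ?_ (powE_nonneg hσ0.le _))⟩
  exact (powE_antitone hσ0.le hσ1.le hproper).trans_eq (powE_one σ)

end FPS
end

section
/- Mixed associativity of composition and multiplicative mixed composition: for c ∈ ℝ^q⟨⟨X'⟩⟩ with |X'| = p+1, d ∈ ℝ^p⟨⟨X⟩⟩ and e ∈ ℝ^m⟨⟨X⟩⟩, one has c ∘ (d ∘̄ δ_e) = (c ∘ d) ∘̄ δ_e. -/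
open scoped BigOperators

namespace FPS

/-!
At a word `η`, both `c ∘ e` and `c ∘̄ δ_e` are finite sums `∑_{|v| ≤ |η|} (c, v) W(v)(η)`, and
`· ∘̄ δ_e` is linear and only reads coefficients of words no longer than `η`. So it suffices that
`ψ_{d ∘̄ δ_e}(v)(1) = ψ_d(v)(1) ∘̄ δ_e` for every word `v`, which follows by induction on `v` once
`· ∘̄ δ_e` fixes `1`, commutes with `x_0 ·` and is a shuffle homomorphism. All three come from the
recursions `(c ∘̄ δ_e)(x_0 η) = (x_0⁻¹c ∘̄ δ_e)(η)` and
`(c ∘̄ δ_e)(x_j η) = (e_j ⧢ (x_j⁻¹c ∘̄ δ_e))(η)`; the shuffle property then follows by strong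
induction on `|η|`.
-/

open Finset

section Shuffle

variable {X : Type*}

theorem sh_cons (a b : Series X) (x : X) (t : List X) :
    sh a b (x :: t) = sh (fun w => a (x :: w)) b t + sh a (fun w => b (x :: w)) t := rfl

theorem sh_zero_right : ∀ (u : List X) (a : Series X), sh a (fun _ => 0) u = 0
  | [], a => by simp [sh]
  | x :: t, a => by rw [sh_cons, sh_zero_right t, sh_zero_right t, add_zero]

theorem sh_add_left : ∀ (u : List X) (a b c : Series X),
    sh (fun w => a w + b w) c u = sh a c u + sh b c u
  | [], a, b, c => by simp only [sh]; ring
  | x :: t, a, b, c => by simp only [sh_cons, sh_add_left t]; ring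

theorem sh_add_right : ∀ (u : List X) (a b c : Series X),
    sh a (fun w => b w + c w) u = sh a b u + sh a c u
  | [], a, b, c => by simp only [sh]; ring
  | x :: t, a, b, c => by simp only [sh_cons, sh_add_right t]; ring

theorem sh_mul_right : ∀ (u : List X) (r : ℝ) (a b : Series X),
    sh a (fun w => r * b w) u = r * sh a b u
  | [], r, a, b => by simp only [sh]; ring
  | x :: t, r, a, b => by simp only [sh_cons, sh_mul_right t]; ring

theorem sh_sum_right : ∀ (u : List X) {ι : Type*} (s : Finset ι) (a : Series X)
    (f : ι → Series X), sh a (fun w => ∑ i ∈ s, f i w) u = ∑ i ∈ s, sh a (f i) u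
  | [], _, s, a, f => by simp [sh, mul_sum]
  | x :: t, _, s, a, f => by simp only [sh_cons, sh_sum_right t, sum_add_distrib]

theorem sh_comm : ∀ (u : List X) (a b : Series X), sh a b u = sh b a u
  | [], a, b => mul_comm _ _
  | x :: t, a, b => by rw [sh_cons, sh_cons, sh_comm t, sh_comm t a, add_comm]

theorem sh_assoc : ∀ (u : List X) (a b c : Series X), sh (sh a b) c u = sh a (sh b c) u
  | [], a, b, c => mul_assoc _ _ _
  | x :: t, a, b, c => by
      simp only [sh_cons, sh_add_left, sh_add_right, sh_assoc t]
      ring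

theorem sh_left_comm (u : List X) (a b c : Series X) : sh a (sh b c) u = sh b (sh a c) u := by
  rw [← sh_assoc, funext fun w => sh_comm w a b, sh_assoc]

theorem sh_congr : ∀ (u : List X) {a a' b b' : Series X},
    (∀ w : List X, w.length ≤ u.length → a w = a' w) →
    (∀ w : List X, w.length ≤ u.length → b w = b' w) → sh a b u = sh a' b' u
  | [], a, a', b, b', ha, hb => by simp [sh, ha [] le_rfl, hb [] le_rfl]
  | x :: t, a, a', b, b', ha, hb => by
      have shorter : ∀ w : List X, w.length ≤ t.length → w.length ≤ (x :: t).length :=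
        fun w hw => hw.trans (Nat.le_succ _)
      have cons_le : ∀ w : List X, w.length ≤ t.length → (x :: w).length ≤ (x :: t).length :=
        fun w hw => Nat.succ_le_succ hw
      rw [sh_cons, sh_cons,
        sh_congr t (fun w hw => ha _ (cons_le w hw)) (fun w hw => hb w (shorter w hw)),
        sh_congr t (fun w hw => ha w (shorter w hw)) (fun w hw => hb _ (cons_le w hw))]

theorem sh_eq_zero_of_right (u : List X) (a b : Series X)
    (h : ∀ w : List X, w.length ≤ u.length → b w = 0) : sh a b u = 0 :=
  (sh_congr u (fun _ _ => rfl) h).trans (sh_zero_right u a)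

end Shuffle

theorem sum_vector_zero {α M : Type*} [Fintype α] [AddCommMonoid M]
    (F : List.Vector α 0 → M) : ∑ v, F v = F List.Vector.nil :=
  Fintype.sum_eq_single _ fun v hv => absurd v.eq_nil hv

theorem sum_vector_succ {α M : Type*} [Fintype α] [AddCommMonoid M] {k : ℕ}
    (F : List.Vector α (k + 1) → M) : ∑ v, F v = ∑ x : α, ∑ t : List.Vector α k, F (x ::ᵥ t) := by
  let consEquiv : α × List.Vector α k ≃ List.Vector α (k + 1) :=
    { toFun := fun p => p.1 ::ᵥ p.2
      invFun := fun v => (v.head, v.tail)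
      left_inv := fun p => by simp
      right_inv := fun v => v.cons_head_tail }
  rw [← consEquiv.sum_comp, Fintype.sum_prod_type]
  rfl

section PartialSum

variable {Y Z : Type*} [Fintype Y]

def partialSum (s : Series Y) (W : List Y → Series Z) (n : ℕ) : Series Z := fun η =>
  ∑ k ∈ range (n + 1), ∑ v : List.Vector Y k, s v.toList * W v.toList η

theorem partialSum_eq_of_le {s : Series Y} {W : List Y → Series Z}
    (hW : ∀ v u, u.length < v.length → W v u = 0) {η : List Z} {n : ℕ} (h : η.length ≤ n) :
    partialSum s W n η = partialSum s W η.length η := by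
  refine (sum_subset (range_subset_range.mpr (by omega)) fun k hk hk' => ?_).symm
  refine sum_eq_zero fun v _ => ?_
  rw [mem_range] at hk hk'
  rw [hW v.toList η (by rw [v.toList_length]; omega), mul_zero]

theorem sh_partialSum_right (a : Series Z) (s : Series Y) (W : List Y → Series Z) (n : ℕ)
    (u : List Z) : sh a (partialSum s W n) u = partialSum s (fun v => sh a (W v)) n u := by
  unfold partialSum
  rw [sh_sum_right]
  simp only [sh_sum_right, sh_mul_right]

end PartialSum

section Mix

variable {m : ℕ} (e : Fin m → Series (Fin (m + 1)))

theorem phiWord_apply_of_length_lt :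
    ∀ (v : List (Fin (m + 1))) (w : Series (Fin (m + 1))) (u : List (Fin (m + 1))),
      u.length < v.length → phiWord e v w u = 0
  | [], _, _, h => absurd h (Nat.not_lt_zero _)
  | i :: _, _, [], _ => by cases i using Fin.cases <;> rfl
  | i :: t, w, _ :: u, h => by
      have ht : ∀ u' : List (Fin (m + 1)), u'.length ≤ u.length → phiWord e t w u' = 0 :=
        fun u' hu' =>
          phiWord_apply_of_length_lt t w u' (by simp only [List.length_cons] at h; omega)
      cases i using Fin.cases with
      | zero => simp [phiWord, leftc, ht u le_rfl]
      | succ j => simp [phiWord, leftc, sh_eq_zero_of_right u (e j) _ ht]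

theorem psiWord_apply_of_length_lt {ℓ : ℕ} (d : Fin ℓ → Series (Fin (m + 1))) :
    ∀ (v : List (Fin (ℓ + 1))) (w : Series (Fin (m + 1))) (u : List (Fin (m + 1))),
      u.length < v.length → psiWord d v w u = 0
  | [], _, _, h => absurd h (Nat.not_lt_zero _)
  | _ :: _, _, [], _ => rfl
  | i :: t, w, _ :: u, h => by
      have := sh_eq_zero_of_right u (Fin.cases one d i) _ fun u' hu' =>
        psiWord_apply_of_length_lt d t w u' (by simp only [List.length_cons] at h; omega)
      simp [psiWord, leftc, this]

theorem mix_apply_eq_partialSum (c : Series (Fin (m + 1))) {η : List (Fin (m + 1))} {n : ℕ}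
    (h : η.length ≤ n) : mix c e η = partialSum c (fun v => phiWord e v one) n η :=
  (partialSum_eq_of_le (phiWord_apply_of_length_lt e · one) h).symm

theorem comp_apply_eq_partialSum {ℓ : ℕ} (c : Series (Fin (ℓ + 1)))
    (d : Fin ℓ → Series (Fin (m + 1))) {η : List (Fin (m + 1))} {n : ℕ} (h : η.length ≤ n) :
    comp c d η = partialSum c (fun v => psiWord d v one) n η :=
  (partialSum_eq_of_le (psiWord_apply_of_length_lt d · one) h).symm

theorem mix_congr {c c' : Series (Fin (m + 1))} {η : List (Fin (m + 1))}
    (h : ∀ w : List (Fin (m + 1)), w.length ≤ η.length → c w = c' w) :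
    mix c e η = mix c' e η := by
  refine sum_congr rfl fun k hk => sum_congr rfl fun v _ => ?_
  rw [mem_range] at hk
  rw [h v.toList (by rw [v.toList_length]; omega)]

theorem mix_zero (η : List (Fin (m + 1))) : mix (fun _ => 0) e η = 0 := by
  simp [mix]

theorem mix_add (c c' : Series (Fin (m + 1))) (η : List (Fin (m + 1))) :
    mix (fun w => c w + c' w) e η = mix c e η + mix c' e η := by
  simp [mix, add_mul, sum_add_distrib]

theorem mix_mul (r : ℝ) (c : Series (Fin (m + 1))) (η : List (Fin (m + 1))) :
    mix (fun w => r * c w) e η = r * mix c e η := by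
  simp [mix, mul_sum, mul_assoc]

theorem mix_sum {ι : Type*} (s : Finset ι) (f : ι → Series (Fin (m + 1)))
    (η : List (Fin (m + 1))) : mix (fun w => ∑ i ∈ s, f i w) e η = ∑ i ∈ s, mix (f i) e η := by
  simp only [mix, sum_mul]
  exact (sum_congr rfl fun _ _ => sum_comm).trans sum_comm

theorem mix_partialSum {Y : Type*} [Fintype Y] (s : Series Y) (W : List Y → Series (Fin (m + 1)))
    (n : ℕ) (η : List (Fin (m + 1))) :
    mix (partialSum s W n) e η = partialSum s (fun v => mix (W v) e) n η := by
  unfold partialSum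
  rw [mix_sum]
  simp only [mix_sum, mix_mul]

theorem mix_nil (c : Series (Fin (m + 1))) : mix c e [] = c [] := by
  simp [mix, phiWord, one]

theorem phiWord_cons_apply_cons_of_ne {x y : Fin (m + 1)} (h : y ≠ x) (t : List (Fin (m + 1)))
    (w : Series (Fin (m + 1))) (η : List (Fin (m + 1))) : phiWord e (y :: t) w (x :: η) = 0 := by
  cases y using Fin.cases <;> simp [phiWord, leftc, h.symm]

theorem mix_cons (c : Series (Fin (m + 1))) (x : Fin (m + 1)) (η : List (Fin (m + 1))) :
    mix c e (x :: η) = ∑ k ∈ range (η.length + 1), ∑ t : List.Vector (Fin (m + 1)) k,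
      c (x :: t.toList) * phiWord e (x :: t.toList) one (x :: η) := by
  have empty_word : c [] * phiWord e [] one (x :: η) = 0 := by simp [phiWord, one]
  rw [mix, List.length_cons, sum_range_succ', sum_vector_zero, List.Vector.toList_nil,
    empty_word, add_zero]
  refine sum_congr rfl fun k _ => ?_
  rw [sum_vector_succ, Fintype.sum_eq_single x fun y hy => sum_eq_zero fun t _ => ?_]
  · simp only [List.Vector.toList_cons]
  · rw [List.Vector.toList_cons, phiWord_cons_apply_cons_of_ne e hy, mul_zero]

theorem mix_cons_zero (c : Series (Fin (m + 1))) (η : List (Fin (m + 1))) :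
    mix c e (0 :: η) = mix (fun w => c (0 :: w)) e η := by
  rw [mix_cons]
  simp [mix, phiWord, leftc]

theorem mix_cons_succ (c : Series (Fin (m + 1))) (j : Fin m) (η : List (Fin (m + 1))) :
    mix c e (j.succ :: η) = sh (e j) (mix (fun w => c (j.succ :: w)) e) η :=
  calc mix c e (j.succ :: η)
      = partialSum (fun w => c (j.succ :: w)) (fun v => sh (e j) (phiWord e v one))
          η.length η := by
        rw [mix_cons]
        simp [partialSum, phiWord, leftc]
    _ = sh (e j) (partialSum (fun w => c (j.succ :: w)) (fun v => phiWord e v one) η.length) η :=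
        (sh_partialSum_right _ _ _ _ _).symm
    _ = sh (e j) (mix (fun w => c (j.succ :: w)) e) η :=
        sh_congr η (fun _ _ => rfl) fun w hw => (mix_apply_eq_partialSum e _ hw).symm

theorem mix_cons_eq_zero {c : Series (Fin (m + 1))} {x : Fin (m + 1)} (h : ∀ w, c (x :: w) = 0)
    (η : List (Fin (m + 1))) : mix c e (x :: η) = 0 := by
  have tail_zero : (fun w => c (x :: w)) = fun _ => 0 := funext h
  cases x using Fin.cases with
  | zero => rw [mix_cons_zero, tail_zero, mix_zero]
  | succ j => rw [mix_cons_succ, tail_zero, funext (mix_zero e), sh_zero_right]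

theorem mix_one : mix one e = one := by
  funext η
  rcases η with _ | ⟨x, η⟩
  · simp [mix_nil]
  · rw [mix_cons_eq_zero e (fun w => by simp [one])]
    simp [one]

theorem mix_leftc_zero (s : Series (Fin (m + 1))) : mix (leftc 0 s) e = leftc 0 (mix s e) := by
  funext η
  rcases η with _ | ⟨x, η⟩
  · rw [mix_nil]
    rfl
  · cases x using Fin.cases with
    | zero =>
      rw [mix_cons_zero]
      simp [leftc]
    | succ j =>
      rw [mix_cons_eq_zero e (fun w => by simp [leftc, Fin.succ_ne_zero])]
      simp [leftc, Fin.succ_ne_zero]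

theorem mix_sh_apply : ∀ (η : List (Fin (m + 1))) (a b : Series (Fin (m + 1))),
    mix (sh a b) e η = sh (mix a e) (mix b e) η
  | [], a, b => by simp [mix_nil, sh]
  | x :: η, a, b => by
    cases x using Fin.cases with
    | zero => simp only [mix_cons_zero, sh_cons, mix_add, mix_sh_apply η]
    | succ j =>
      have tails : ∀ w : List (Fin (m + 1)), w.length ≤ η.length →
          mix (fun w => sh a b (j.succ :: w)) e w =
            sh (mix (fun w => a (j.succ :: w)) e) (mix b e) w
              + sh (mix a e) (mix (fun w => b (j.succ :: w)) e) w := fun w hw => by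
        simp only [sh_cons, mix_add, mix_sh_apply w]
      rw [mix_cons_succ, sh_cons, sh_congr η (fun _ _ => rfl) tails, sh_add_right]
      simp only [mix_cons_succ]
      rw [sh_assoc, sh_left_comm η (mix a e)]
termination_by η => η.length

theorem mix_sh (a b : Series (Fin (m + 1))) : mix (sh a b) e = sh (mix a e) (mix b e) :=
  funext fun η => mix_sh_apply e η a b

theorem psiWord_mix {p : ℕ} (d : Fin p → Series (Fin (m + 1))) :
    ∀ (v : List (Fin (p + 1))) (w : Series (Fin (m + 1))),
      psiWord (fun j => mix (d j) e) v (mix w e) = mix (psiWord d v w) e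
  | [], _ => rfl
  | i :: t, w => by
      have mix_cases : mix (Fin.cases one d i) e = Fin.cases one (fun j => mix (d j) e) i := by
        cases i using Fin.cases <;> simp [mix_one]
      simp only [psiWord, psiWord_mix d t, mix_leftc_zero, mix_sh, mix_cases]

end Mix

/-- Mixed associativity of the composition product and the multiplicative
mixed composition product: `c ∘ (d ∘̄ δ_e) = (c ∘ d) ∘̄ δ_e`. -/
theorem comp_mix_assoc (q p m : ℕ) (c : Fin q → Series (Fin (p + 1)))
    (d : Fin p → Series (Fin (m + 1))) (e : Fin m → Series (Fin (m + 1))) :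
    ∀ i : Fin q, comp (c i) (fun j => mix (d j) e) = mix (comp (c i) d) e := by
  intro i
  funext η
  calc comp (c i) (fun j => mix (d j) e) η
      = partialSum (c i) (fun v => mix (psiWord d v one) e) η.length η := by
        rw [comp_apply_eq_partialSum _ _ le_rfl]
        simp only [← psiWord_mix e d _ one, mix_one]
    _ = mix (partialSum (c i) (fun v => psiWord d v one) η.length) e η :=
        (mix_partialSum e _ _ _ _).symm
    _ = mix (comp (c i) d) e η :=
        mix_congr e fun w hw => (comp_apply_eq_partialSum _ _ hw).symm

end FPS
end
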